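/- arXiv:1304.3943 — 2 statements merged into one kernel-verified Lean document; each statement's English description precedes it below -/
import Mathlib

section
/- Let f : 𝕋 → ℂ be measurable with ‖f‖_∞ < ∞ and ‖f‖_1 > 0, and suppose an operator T satisfies, for some constant K and all p ∈ (1,2], the weak-type bound ‖Tf‖_{L^{p,∞}} ≤ K·log(e + p')·‖f‖_p where p' = p/(p−1). Then ‖Tf‖_{L^{1,∞}} ≤ C·K·‖f‖_1·log(e^e + ‖f‖_∞/‖f‖_1) for an absolute constant C. -/
open MeasureTheory Real
open scoped ENNReal

/-! On a probability space `‖g‖_{1,∞} ≤ ‖g‖_{p,∞}`, and a bounded `f` interpolates as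
`‖f‖_p ≤ ‖f‖_∞ ^ (1/p') * ‖f‖_1 ^ (1/p) = ‖f‖_1 * (‖f‖_∞ / ‖f‖_1) ^ (1/p')`.
With `p' = max 2 (log (‖f‖_∞ / ‖f‖_1))` the last factor is at most `e`, while
`log (e + p') ≤ log (e^e + ‖f‖_∞ / ‖f‖_1)`; this gives the bound with `C = e`. -/

theorem Real.conjExponent_le_two {q : ℝ} (hq : 2 ≤ q) : q.conjExponent ≤ 2 := by
  rw [conjExponent, div_le_iff₀ (by linarith)]
  linarith

theorem Real.rpow_inv_le_exp_one_of_le_exp {R q : ℝ} (hR : 0 ≤ R) (hq : 0 < q) (h : R ≤ exp q) :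
    R ^ q⁻¹ ≤ exp 1 :=
  calc R ^ q⁻¹ ≤ exp q ^ q⁻¹ := by gcongr
    _ = exp 1 := by rw [← exp_mul, mul_inv_cancel₀ hq.ne']

theorem Real.HolderConjugate.rpow_inv_mul_rpow_inv_eq {p q a b : ℝ} (hpq : p.HolderConjugate q)
    (ha : 0 ≤ a) (hb : 0 < b) : a ^ q⁻¹ * b ^ p⁻¹ = (a / b) ^ q⁻¹ * b := by
  rw [div_rpow ha hb.le, div_mul_eq_mul_div, eq_div_iff (by positivity), mul_assoc,
    ← rpow_add hb, hpq.inv_add_inv_eq_one, rpow_one]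

theorem Real.log_exp_one_add_max_two_log_le {R : ℝ} (hR : 0 ≤ R) :
    log (exp 1 + max 2 (log R)) ≤ log (exp (exp 1) + R) := by
  have he : exp 1 + 2 ≤ exp (exp 1) := by
    nlinarith [quadratic_le_exp_of_nonneg (exp_pos 1).le, add_one_le_exp 1]
  have hlog := log_le_self hR
  apply log_le_log (by positivity)
  rw [← le_sub_iff_add_le', max_le_iff]
  constructor <;> linarith

section eLpNorm

variable {α ε : Type*} [MeasurableSpace α] [TopologicalSpace ε] [ContinuousENorm ε]
  {μ : Measure α} {f : α → ε}

theorem lintegral_enorm_rpow_le_eLpNorm_top_rpow_mul_eLpNorm_one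
    (hf : AEStronglyMeasurable f μ) {p : ℝ} (hp : 1 ≤ p) :
    ∫⁻ x, ‖f x‖ₑ ^ p ∂μ ≤ eLpNorm f ⊤ μ ^ (p - 1) * eLpNorm f 1 μ := by
  rw [eLpNorm_one_eq_lintegral_enorm (f := f), ← lintegral_const_mul'' _ hf.enorm,
    eLpNorm_exponent_top (f := f)]
  refine lintegral_mono_ae ((ae_le_eLpNormEssSup (f := f)).mono fun x hx => ?_)
  calc ‖f x‖ₑ ^ p = ‖f x‖ₑ ^ (p - 1 + 1) := by rw [sub_add_cancel]
    _ = ‖f x‖ₑ ^ (p - 1) * ‖f x‖ₑ := by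
        rw [ENNReal.rpow_add_of_nonneg _ _ (sub_nonneg.2 hp) zero_le_one, ENNReal.rpow_one]
    _ ≤ eLpNormEssSup f μ ^ (p - 1) * ‖f x‖ₑ := by gcongr

theorem eLpNorm_le_eLpNorm_top_rpow_mul_eLpNorm_one_rpow (hf : AEStronglyMeasurable f μ)
    {p q : ℝ} (hpq : p.HolderConjugate q) :
    eLpNorm f (ENNReal.ofReal p) μ ≤ eLpNorm f ⊤ μ ^ q⁻¹ * eLpNorm f 1 μ ^ p⁻¹ := by
  rw [eLpNorm_eq_lintegral_rpow_enorm_toReal (by simp [hpq.pos]) ENNReal.ofReal_ne_top,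
    ENNReal.toReal_ofReal hpq.nonneg]
  calc (∫⁻ x, ‖f x‖ₑ ^ p ∂μ) ^ (1 / p)
      ≤ (eLpNorm f ⊤ μ ^ (p - 1) * eLpNorm f 1 μ) ^ (1 / p) :=
        ENNReal.rpow_le_rpow
          (lintegral_enorm_rpow_le_eLpNorm_top_rpow_mul_eLpNorm_one hf hpq.lt.le) hpq.one_div_nonneg
    _ = eLpNorm f ⊤ μ ^ q⁻¹ * eLpNorm f 1 μ ^ p⁻¹ := by
        rw [ENNReal.mul_rpow_of_nonneg _ _ hpq.one_div_nonneg, ← ENNReal.rpow_mul, one_div,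
          ← hpq.one_sub_inv, sub_mul, one_mul, mul_inv_cancel₀ hpq.ne_zero]

theorem toReal_eLpNorm_le_exp_one_mul_toReal_eLpNorm_one (hf : AEStronglyMeasurable f μ)
    {p q : ℝ} (hpq : p.HolderConjugate q) (htop : eLpNorm f ⊤ μ ≠ ⊤)
    (hf1 : 0 < (eLpNorm f 1 μ).toReal)
    (hq : (eLpNorm f ⊤ μ).toReal / (eLpNorm f 1 μ).toReal ≤ exp q) :
    (eLpNorm f (ENNReal.ofReal p) μ).toReal ≤ exp 1 * (eLpNorm f 1 μ).toReal := by
  have h1top : eLpNorm f 1 μ ≠ ⊤ := (ENNReal.toReal_pos_iff.1 hf1).2.ne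
  calc (eLpNorm f (ENNReal.ofReal p) μ).toReal
      ≤ (eLpNorm f ⊤ μ).toReal ^ q⁻¹ * (eLpNorm f 1 μ).toReal ^ p⁻¹ := by
        have := ENNReal.toReal_mono (ENNReal.mul_ne_top
          (ENNReal.rpow_ne_top_of_nonneg hpq.symm.inv_nonneg htop)
          (ENNReal.rpow_ne_top_of_nonneg hpq.inv_nonneg h1top))
          (eLpNorm_le_eLpNorm_top_rpow_mul_eLpNorm_one_rpow hf hpq)
        rwa [ENNReal.toReal_mul, ← ENNReal.toReal_rpow, ← ENNReal.toReal_rpow] at this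
    _ = ((eLpNorm f ⊤ μ).toReal / (eLpNorm f 1 μ).toReal) ^ q⁻¹ * (eLpNorm f 1 μ).toReal :=
        hpq.rpow_inv_mul_rpow_inv_eq ENNReal.toReal_nonneg hf1
    _ ≤ exp 1 * (eLpNorm f 1 μ).toReal := by
        gcongr
        exact rpow_inv_le_exp_one_of_le_exp (by positivity) hpq.symm.pos hq

theorem toReal_eLpNorm_one_le_toReal_eLpNorm [IsProbabilityMeasure μ]
    (hf : AEStronglyMeasurable f μ) (htop : eLpNorm f ⊤ μ ≠ ⊤) {p : ℝ≥0∞} (hp : 1 ≤ p) :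
    (eLpNorm f 1 μ).toReal ≤ (eLpNorm f p μ).toReal :=
  ENNReal.toReal_mono ((eLpNorm_le_eLpNorm_of_exponent_le le_top hf).trans_lt htop.lt_top).ne
    (eLpNorm_le_eLpNorm_of_exponent_le hp hf)

end eLpNorm

theorem mul_measureReal_le_of_mul_measureReal_rpow_le {α : Type*} [MeasurableSpace α]
    {μ : Measure α} [IsZeroOrProbabilityMeasure μ] {s : Set α} {lam p B : ℝ} (hlam : 0 ≤ lam)
    (hp : 1 ≤ p) (h : lam * μ.real s ^ (1 / p) ≤ B) : lam * μ.real s ≤ B := by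
  refine le_trans ?_ h
  gcongr
  exact self_le_rpow_of_le_one measureReal_nonneg measureReal_le_one
    (by rw [one_div]; exact inv_le_one_of_one_le₀ hp)

/-- If an operator `T` satisfies the weak-type `(p,p)` bounds
`‖Tf‖_{p,∞} ≤ K·log(e + p')·‖f‖_p` for all `1 < p ≤ 2` (on a probability space),
then for `f` with `0 < ‖f‖₁` and `‖f‖_∞ < ∞`,
`‖Tf‖_{1,∞} ≤ C·K·‖f‖₁·log(e^e + ‖f‖_∞/‖f‖₁)` for an absolute constant `C`. -/
theorem weak_one_infty_from_weak_p :
    ∃ C : ℝ, 0 < C ∧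
      ∀ (α : Type) (_ : MeasurableSpace α) (μ : Measure α), IsProbabilityMeasure μ →
        ∀ (T : (α → ℂ) → α → ℂ) (K : ℝ) (f : α → ℂ), Measurable f →
          eLpNorm f ⊤ μ < ⊤ → eLpNorm f 1 μ ≠ 0 →
          (∀ p : ℝ, 1 < p → p ≤ 2 → ∀ lam : ℝ, 0 < lam →
            lam * (μ {x | lam < ‖T f x‖}).toReal ^ (1 / p) ≤
              K * Real.log (Real.exp 1 + p / (p - 1)) *
                (eLpNorm f (ENNReal.ofReal p) μ).toReal) →
          ∀ lam : ℝ, 0 < lam →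
            lam * (μ {x | lam < ‖T f x‖}).toReal ≤
              C * K * (eLpNorm f 1 μ).toReal *
                Real.log (Real.exp (Real.exp 1) +
                  (eLpNorm f ⊤ μ).toReal / (eLpNorm f 1 μ).toReal) := by
  refine ⟨exp 1, exp_pos 1, fun α _ μ _ T K f hf hftop hf1 hT lam hlam => ?_⟩
  have hfm : AEStronglyMeasurable f μ := hf.aestronglyMeasurable
  have hN : 0 < (eLpNorm f 1 μ).toReal :=
    ENNReal.toReal_pos hf1 ((eLpNorm_le_eLpNorm_of_exponent_le le_top hfm).trans_lt hftop).ne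
  set R := (eLpNorm f ⊤ μ).toReal / (eLpNorm f 1 μ).toReal
  have hR : 0 ≤ R := by positivity
  set q := max 2 (log R)
  have hq : 2 ≤ q := le_max_left _ _
  have hpq : q.conjExponent.HolderConjugate q := (HolderConjugate.conjExponent (by linarith)).symm
  have hweak := hT _ hpq.lt (conjExponent_le_two hq) lam hlam
  rw [← hpq.conjugate_eq] at hweak
  have hfp := toReal_eLpNorm_le_exp_one_mul_toReal_eLpNorm_one hfm hpq hftop.ne hN
    ((le_exp_log R).trans (exp_le_exp.2 (le_max_right _ _)))
  have hfp_pos := hN.trans_le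
    (toReal_eLpNorm_one_le_toReal_eLpNorm hfm hftop.ne (p := .ofReal _) (by simpa using hpq.lt.le))
  have hK : 0 ≤ K :=
    nonneg_of_mul_nonneg_left (nonneg_of_mul_nonneg_left (le_trans (by positivity) hweak) hfp_pos)
      (log_pos (by linarith [exp_pos 1]))
  calc lam * (μ {x | lam < ‖T f x‖}).toReal
      ≤ K * log (exp 1 + q) * (eLpNorm f (ENNReal.ofReal q.conjExponent) μ).toReal :=
        mul_measureReal_le_of_mul_measureReal_rpow_le hlam.le hpq.lt.le hweak
    _ ≤ K * log (exp (exp 1) + R) * (exp 1 * (eLpNorm f 1 μ).toReal) := by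
        gcongr K * ?_ * ?_
        · exact mul_nonneg hK (log_nonneg (by linarith [one_le_exp (exp_pos 1).le]))
        · exact log_exp_one_add_max_two_log_le hR
    _ = exp 1 * K * (eLpNorm f 1 μ).toReal * log (exp (exp 1) + R) := by ring
end

section
/- Let A_k > 0 and suppose A_k/(e^k·log(e+k)) < e^{−e^{e^{k+1}}} (the 'small regime'). Then (A_k/(e^k log(e+k)))·log(e^e + (e^k log(e+k))/A_k)·log(e^e + e^{e^{e^{k+1}}}) ≤ C·e^{−k} for an absolute constant C and all k ≥ 1. -/
open Real

-- a·log(1/a) ≤ 2√a for 0 < a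
lemma aux_alog (a : ℝ) (ha : 0 < a) : a * Real.log a⁻¹ ≤ 2 * Real.sqrt a := by
  have hs : 0 < Real.sqrt a := Real.sqrt_pos.mpr ha
  have hsq : Real.sqrt a * Real.sqrt a = a := Real.mul_self_sqrt ha.le
  have h1 : a⁻¹ = ((Real.sqrt a)⁻¹)^2 := by
    rw [sq, ← mul_inv, hsq]
  have h2 : Real.log a⁻¹ = 2 * Real.log (Real.sqrt a)⁻¹ := by
    rw [h1, Real.log_pow]; push_cast; ring
  have h3 : Real.log (Real.sqrt a)⁻¹ ≤ (Real.sqrt a)⁻¹ - 1 :=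
    Real.log_le_sub_one_of_pos (by positivity)
  have h4 : a * (Real.sqrt a)⁻¹ = Real.sqrt a := by
    have := mul_inv_cancel_right₀ hs.ne' (Real.sqrt a)
    rw [hsq] at this; exact this
  have h5 : a * Real.log (Real.sqrt a)⁻¹ ≤ a * ((Real.sqrt a)⁻¹ - 1) :=
    mul_le_mul_of_nonneg_left h3 ha.le
  calc a * Real.log a⁻¹ = 2 * (a * Real.log (Real.sqrt a)⁻¹) := by rw [h2]; ring
    _ ≤ 2 * Real.sqrt a := by nlinarith

-- the key abstract inequality
lemma aux_main (k a E : ℝ) (hk : 1 ≤ k) (ha : 0 < a) (hE4k : 4 * k ≤ E)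
    (hEe : Real.exp 1 ≤ E) (haE : a < Real.exp (-E)) :
    a * Real.log (Real.exp (Real.exp 1) + a⁻¹) *
      Real.log (Real.exp (Real.exp 1) + Real.exp E) ≤ 100 * Real.exp (-k) := by
  have he1 : (2:ℝ) < Real.exp 1 := by
    have := Real.exp_one_gt_d9; linarith
  have hEpos : 0 < E := lt_of_lt_of_le (by linarith) hEe
  have hE2 : (2:ℝ) ≤ Real.exp E := by
    have := Real.add_one_le_exp E; linarith
  have hee2 : (2:ℝ) ≤ Real.exp (Real.exp 1) := by
    have := Real.add_one_le_exp (Real.exp 1); linarith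
  have hainv : Real.exp E < a⁻¹ := by
    rw [← one_div, lt_div_iff₀ ha]
    calc Real.exp E * a < Real.exp E * Real.exp (-E) := by
          nlinarith [Real.exp_pos E]
      _ = 1 := by rw [← Real.exp_add]; simp
  have hb1 : Real.log (Real.exp (Real.exp 1) + Real.exp E) ≤ E + Real.exp 1 := by
    have harg : Real.exp (Real.exp 1) + Real.exp E ≤ Real.exp (E + Real.exp 1) := by
      rw [Real.exp_add]; nlinarith
    calc Real.log (Real.exp (Real.exp 1) + Real.exp E)
        ≤ Real.log (Real.exp (E + Real.exp 1)) :=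
          Real.log_le_log (by positivity) harg
      _ = E + Real.exp 1 := Real.log_exp _
  have hb2 : Real.log (Real.exp (Real.exp 1) + a⁻¹) ≤ Real.exp 1 + Real.log a⁻¹ := by
    have harg : Real.exp (Real.exp 1) + a⁻¹ ≤ Real.exp (Real.exp 1) * a⁻¹ := by
      nlinarith
    calc Real.log (Real.exp (Real.exp 1) + a⁻¹)
        ≤ Real.log (Real.exp (Real.exp 1) * a⁻¹) :=
          Real.log_le_log (by positivity) harg
      _ = Real.exp 1 + Real.log a⁻¹ := by
          rw [Real.log_mul (by positivity) (by positivity), Real.log_exp]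
  have hp1 : 0 ≤ Real.log (Real.exp (Real.exp 1) + a⁻¹) := by
    apply Real.log_nonneg; nlinarith
  have hp2 : 0 ≤ Real.log (Real.exp (Real.exp 1) + Real.exp E) := by
    apply Real.log_nonneg; nlinarith
  have hlog_inv_pos : 0 ≤ Real.log a⁻¹ := by
    apply Real.log_nonneg; nlinarith
  have hsa : 0 < Real.sqrt a := Real.sqrt_pos.mpr ha
  have hkey : a * (Real.exp 1 + Real.log a⁻¹) ≤ 5 * Real.sqrt a := by
    have h1 : a * Real.log a⁻¹ ≤ 2 * Real.sqrt a := aux_alog a ha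
    have ha1 : a ≤ 1 := by
      have : Real.exp (-E) ≤ 1 := Real.exp_le_one_iff.mpr (by linarith)
      linarith
    have ha2 : a ≤ Real.sqrt a := by
      nlinarith [Real.mul_self_sqrt ha.le, Real.sqrt_le_one.mpr ha1]
    have he3 : Real.exp 1 ≤ 3 := by
      have := Real.exp_one_lt_d9; linarith
    nlinarith
  have hsqa : Real.sqrt a ≤ Real.exp (-(E/2)) := by
    have h1 : Real.sqrt a ≤ Real.sqrt (Real.exp (-E)) := Real.sqrt_le_sqrt haE.le
    have h2 : Real.sqrt (Real.exp (-E)) = Real.exp (-(E/2)) := by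
      rw [← Real.exp_half]; ring_nf
    linarith [h1.trans_eq h2]
  have hEexp : E * Real.exp (-(E/4)) ≤ 4 := by
    have h1 : E/4 ≤ Real.exp (E/4) := by
      have := Real.add_one_le_exp (E/4); linarith
    have h2 : Real.exp (E/4) * Real.exp (-(E/4)) = 1 := by
      rw [← Real.exp_add]; ring_nf; exact Real.exp_zero
    nlinarith [Real.exp_pos (-(E/4))]
  have step1 : a * Real.log (Real.exp (Real.exp 1) + a⁻¹) *
      Real.log (Real.exp (Real.exp 1) + Real.exp E)
      ≤ (a * (Real.exp 1 + Real.log a⁻¹)) * (E + Real.exp 1) := by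
    have h := mul_le_mul hb2 hb1 hp2
      (by positivity : (0:ℝ) ≤ Real.exp 1 + Real.log a⁻¹)
    have h' := mul_le_mul_of_nonneg_left h ha.le
    nlinarith
  have step2 : (a * (Real.exp 1 + Real.log a⁻¹)) * (E + Real.exp 1)
      ≤ 5 * Real.exp (-(E/2)) * (2*E) := by
    have hEe2 : E + Real.exp 1 ≤ 2*E := by linarith
    have hnn : 0 ≤ a * (Real.exp 1 + Real.log a⁻¹) := by positivity
    have h := mul_le_mul hkey hEe2 (by linarith [Real.exp_pos 1])
      (by positivity : (0:ℝ) ≤ 5 * Real.sqrt a)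
    have h5 : 5 * Real.sqrt a * (2*E) ≤ 5 * Real.exp (-(E/2)) * (2*E) := by
      have : Real.sqrt a * (2*E) ≤ Real.exp (-(E/2)) * (2*E) :=
        mul_le_mul_of_nonneg_right hsqa (by linarith)
      nlinarith
    linarith
  have step3 : 5 * Real.exp (-(E/2)) * (2*E) ≤ 40 * Real.exp (-(E/4)) := by
    have hsplit : Real.exp (-(E/2)) = Real.exp (-(E/4)) * Real.exp (-(E/4)) := by
      rw [← Real.exp_add]; ring_nf
    rw [hsplit]
    have h := mul_le_mul_of_nonneg_right hEexp (Real.exp_pos (-(E/4))).le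
    linarith
  have step4 : (40:ℝ) * Real.exp (-(E/4)) ≤ 100 * Real.exp (-k) := by
    have h : Real.exp (-(E/4)) ≤ Real.exp (-k) :=
      Real.exp_le_exp.mpr (by linarith)
    linarith [Real.exp_pos (-k)]
  linarith

/-- The small-regime (`R₂`) estimate: if `A/(e^k·log(e+k)) < e^{−e^{e^{k+1}}}`, then
`(A/(e^k·log(e+k)))·log(e^e + (e^k·log(e+k))/A)·log(e^e + e^{e^{e^{k+1}}}) ≤ C·e^{−k}`
for an absolute constant `C` and all `k ≥ 1`. -/
theorem small_regime_estimate :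
    ∃ C : ℝ, 0 < C ∧
      ∀ (k : ℕ) (A : ℝ), 1 ≤ k → 0 < A →
        A / (Real.exp k * Real.log (Real.exp 1 + k)) <
          Real.exp (-Real.exp (Real.exp (k + 1))) →
        A / (Real.exp k * Real.log (Real.exp 1 + k)) *
            Real.log (Real.exp (Real.exp 1) + Real.exp k * Real.log (Real.exp 1 + k) / A) *
            Real.log (Real.exp (Real.exp 1) + Real.exp (Real.exp (Real.exp (k + 1)))) ≤
          C * Real.exp (-(k : ℝ)) := by
  refine ⟨100, by norm_num, ?_⟩
  intro k A hk hA hsmall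
  have hk1 : (1:ℝ) ≤ (k:ℝ) := by exact_mod_cast hk
  have he1 : (2:ℝ) < Real.exp 1 := by
    have := Real.exp_one_gt_d9; linarith
  have hLpos : 0 < Real.exp (k:ℝ) * Real.log (Real.exp 1 + (k:ℝ)) :=
    mul_pos (Real.exp_pos _) (Real.log_pos (by linarith))
  have hLA : Real.exp (k:ℝ) * Real.log (Real.exp 1 + (k:ℝ)) / A
      = (A / (Real.exp (k:ℝ) * Real.log (Real.exp 1 + (k:ℝ))))⁻¹ := by
    rw [inv_div]
  have hEk : 2*((k:ℝ)+1) ≤ Real.exp ((k:ℝ)+1) := by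
    have h := Real.add_one_le_exp (((k:ℝ)+1)/2)
    have h2 : Real.exp ((k:ℝ)+1) = Real.exp (((k:ℝ)+1)/2) * Real.exp (((k:ℝ)+1)/2) := by
      rw [← Real.exp_add]; ring_nf
    nlinarith [Real.exp_pos (((k:ℝ)+1)/2)]
  have hE4k : 4*(k:ℝ) ≤ Real.exp (Real.exp ((k:ℝ)+1)) := by
    have h := Real.add_one_le_exp (Real.exp ((k:ℝ)+1)/2)
    have h2 : Real.exp (Real.exp ((k:ℝ)+1)) =
        Real.exp (Real.exp ((k:ℝ)+1)/2) * Real.exp (Real.exp ((k:ℝ)+1)/2) := by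
      rw [← Real.exp_add]; ring_nf
    nlinarith [Real.exp_pos (Real.exp ((k:ℝ)+1)/2)]
  have hEe : Real.exp 1 ≤ Real.exp (Real.exp ((k:ℝ)+1)) := by
    apply Real.exp_le_exp.mpr
    have := Real.add_one_le_exp ((k:ℝ)+1); linarith
  rw [hLA]
  exact aux_main (k:ℝ) _ _ hk1 (div_pos hA hLpos) hE4k hEe hsmall
end
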